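/- arXiv:2002.06310 — 2 statements merged into one kernel-verified Lean document; each statement's English description precedes it below -/
import Mathlib

section
/- Let x ∈ (0,1) be irrational and let p/q be a best 1-rational approximation of x (so p, q are odd, coprime, q > 0). Then there exists an integer n ≥ 0 such that p/q equals the n-th principal convergent p_n/q_n of the odd-odd continued fraction of x. -/
/-- The odd-odd continued fraction map on `[0,1]`.  For `x ∈ [(k-1)/k, k/(k+1))` with `k ≥ 1`
one has `k = ⌊1/(1-x)⌋`, and the two branches are separated by `(2k-1)/(2k+1)`. -/
noncomputable def oocfT (x : ℝ) : ℝ :=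
  if x = 1 then 1
  else if x < (2 * (⌊1 / (1 - x)⌋ : ℝ) - 1) / (2 * (⌊1 / (1 - x)⌋ : ℝ) + 1) then
    ((⌊1 / (1 - x)⌋ : ℝ) * x - ((⌊1 / (1 - x)⌋ : ℝ) - 1)) /
      ((⌊1 / (1 - x)⌋ : ℝ) - ((⌊1 / (1 - x)⌋ : ℝ) + 1) * x)
  else
    ((⌊1 / (1 - x)⌋ : ℝ) - ((⌊1 / (1 - x)⌋ : ℝ) + 1) * x) /
      ((⌊1 / (1 - x)⌋ : ℝ) * x - ((⌊1 / (1 - x)⌋ : ℝ) - 1))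

/-- OOCF partial quotient `a` of a point `y`: `a = k+1` if `y` is in the lower branch
interval `((k-1)/k, (2k-1)/(2k+1))`, and `a = k` if `y ∈ ((2k-1)/(2k+1), k/(k+1))`,
where `k = ⌊1/(1-y)⌋`. -/
noncomputable def oocfA (y : ℝ) : ℤ :=
  if y < (2 * (⌊1 / (1 - y)⌋ : ℝ) - 1) / (2 * (⌊1 / (1 - y)⌋ : ℝ) + 1) then ⌊1 / (1 - y)⌋ + 1
  else ⌊1 / (1 - y)⌋

/-- OOCF partial quotient `ε` of a point `y`: `ε = -1` on the lower branch interval and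
`ε = 1` on the upper one. -/
noncomputable def oocfE (y : ℝ) : ℤ :=
  if y < (2 * (⌊1 / (1 - y)⌋ : ℝ) - 1) / (2 * (⌊1 / (1 - y)⌋ : ℝ) + 1) then -1 else 1

/-- The OOCF convergents `(p'_n, q'_n, p_n, q_n)` of `x`, defined by
`p'_0 = 1, q'_0 = 0, p_0 = 1, q_0 = 1` and
`p'_n = a_n p_{n-1} - p'_{n-1}`, `q'_n = a_n q_{n-1} - q'_{n-1}`,
`p_n = 2 p'_n + ε_n p_{n-1}`, `q_n = 2 q'_n + ε_n q_{n-1}`,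
where `(a_n, ε_n)` are the partial quotients of `x`, i.e. `a_n = oocfA (oocfT^[n-1] x)`,
`ε_n = oocfE (oocfT^[n-1] x)`. -/
noncomputable def oocfConv (x : ℝ) : ℕ → ℤ × ℤ × ℤ × ℤ
  | 0 => (1, 0, 1, 1)
  | n + 1 =>
    let c := oocfConv x n
    (oocfA (oocfT^[n] x) * c.2.2.1 - c.1,
     oocfA (oocfT^[n] x) * c.2.2.2 - c.2.1,
     2 * (oocfA (oocfT^[n] x) * c.2.2.1 - c.1) + oocfE (oocfT^[n] x) * c.2.2.1,
     2 * (oocfA (oocfT^[n] x) * c.2.2.2 - c.2.1) + oocfE (oocfT^[n] x) * c.2.2.2)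

/-- `n`-th sub-convergent numerator `p'_n`. -/
noncomputable def oocfP' (x : ℝ) (n : ℕ) : ℤ := (oocfConv x n).1

/-- `n`-th sub-convergent denominator `q'_n`. -/
noncomputable def oocfQ' (x : ℝ) (n : ℕ) : ℤ := (oocfConv x n).2.1

/-- `n`-th principal convergent numerator `p_n`. -/
noncomputable def oocfP (x : ℝ) (n : ℕ) : ℤ := (oocfConv x n).2.2.1

/-- `n`-th principal convergent denominator `q_n`. -/
noncomputable def oocfQ (x : ℝ) (n : ℕ) : ℤ := (oocfConv x n).2.2.2

/-- `n`-th pseudo-convergent numerator: `p''_n = p'_n + ε_n p_{n-1}` for `n ≥ 1`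
(with the convention `p''_0 = 0`). -/
noncomputable def oocfP'' (x : ℝ) : ℕ → ℤ
  | 0 => 0
  | n + 1 => oocfP' x (n + 1) + oocfE (oocfT^[n] x) * oocfP x n

/-- `n`-th pseudo-convergent denominator: `q''_n = q'_n + ε_n q_{n-1}` for `n ≥ 1`
(with the convention `q''_0 = 1`). -/
noncomputable def oocfQ'' (x : ℝ) : ℕ → ℤ
  | 0 => 1
  | n + 1 => oocfQ' x (n + 1) + oocfE (oocfT^[n] x) * oocfQ x n

/-- `a/b` is a 1-rational: `b > 0`, `a`, `b` both odd and coprime. -/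
def IsOneRat (a b : ℤ) : Prop := 0 < b ∧ Odd a ∧ Odd b ∧ IsCoprime a b

/-- `p/q` is a best 1-rational approximation of `x`: it is a 1-rational and
`|qx - p| < |bx - a|` for every 1-rational `a/b ≠ p/q` with `0 < b ≤ q`. -/
def IsBestOneRatApprox (x : ℝ) (p q : ℤ) : Prop :=
  IsOneRat p q ∧
    ∀ a b : ℤ, IsOneRat a b → b ≤ q → (a : ℝ) / (b : ℝ) ≠ (p : ℝ) / (q : ℝ) →
      |(q : ℝ) * x - (p : ℝ)| < |(b : ℝ) * x - (a : ℝ)|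

/-!
The pairs `(p'_n, q'_n)` and `(p_n, q_n)` form a basis of `ℤ²` (their determinant is `±1`), and `x`
is the image of `y_n = T^n x` under the Möbius map of `[[p'_n, p_n - p'_n], [q'_n, q_n - q'_n]]`.
Writing a 1-rational `a/b` as `(a, b) = σ (p'_n, q'_n) + τ (p_n, q_n)`, parity forces `σ` even and
`τ` odd, and `|b x - a| / |q_n x - p_n| = |σ + τ Y| / Y` with `Y = 1 - y_n`. Now
`q_{n+1} = (2k+1) q_n - 2 q'_n`, where `k = ⌊1/(1 - y_n)⌋` satisfies `k Y < 1`; this makes the ratio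
exceed `1` for every such `(a, b) ≠ (p_n, q_n)` with `0 < b < q_{n+1}`. Hence a best 1-rational
approximation with `q_n ≤ q < q_{n+1}` can only be `p_n/q_n`.
-/

open Set

/-- The index `k ≥ 1` of the interval `[(k-1)/k, k/(k+1))` containing `y ∈ [0,1)`. -/
noncomputable def oocfK (y : ℝ) : ℤ := ⌊1 / (1 - y)⌋

lemma Irrational.of_mul_add_eq_mul_add {y z : ℝ} (hy : Irrational y) {a b c d : ℤ}
    (h : y * (c * z + d) = a * z + b) (hz : (c : ℝ) * z + d ≠ 0) : Irrational z := by
  rintro ⟨r, rfl⟩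
  refine hy ⟨(a * r + b) / (c * r + d), ?_⟩
  push_cast
  rw [div_eq_iff hz, h]

lemma oocfA_oocfE_cases (y : ℝ) :
    (oocfA y = oocfK y + 1 ∧ oocfE y = -1) ∨ (oocfA y = oocfK y ∧ oocfE y = 1) := by
  unfold oocfA oocfE oocfK
  split_ifs <;> simp

lemma isUnit_oocfE (y : ℝ) : IsUnit (oocfE y) := by
  rcases oocfA_oocfE_cases y with ⟨-, h⟩ | ⟨-, h⟩ <;> simp [h]

lemma odd_oocfE (y : ℝ) : Odd (oocfE y) := by
  rcases oocfA_oocfE_cases y with ⟨-, h⟩ | ⟨-, h⟩ <;> simp [h]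

lemma two_mul_oocfA_add_oocfE (y : ℝ) : 2 * oocfA y + oocfE y = 2 * oocfK y + 1 := by
  rcases oocfA_oocfE_cases y with ⟨ha, he⟩ | ⟨ha, he⟩ <;> rw [ha, he]; ring

lemma oocfK_le_oocfA (y : ℝ) : oocfK y ≤ oocfA y := by
  rcases oocfA_oocfE_cases y with ⟨ha, -⟩ | ⟨ha, -⟩ <;> omega

lemma oocfK_le_oocfA_add_oocfE (y : ℝ) : oocfK y ≤ oocfA y + oocfE y := by
  rcases oocfA_oocfE_cases y with ⟨ha, he⟩ | ⟨ha, he⟩ <;> omega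

section Step

variable {y : ℝ}

lemma oocfK_bounds (hy : y ∈ Ico 0 1) :
    1 ≤ oocfK y ∧ (oocfK y : ℝ) - 1 ≤ oocfK y * y ∧ ((oocfK y : ℝ) + 1) * y < oocfK y := by
  have h1y : 0 < 1 - y := sub_pos.2 hy.2
  have hle : (oocfK y : ℝ) ≤ 1 / (1 - y) := Int.floor_le _
  have hlt : 1 / (1 - y) < (oocfK y : ℝ) + 1 := Int.lt_floor_add_one _
  rw [le_div_iff₀ h1y] at hle
  rw [div_lt_iff₀ h1y] at hlt
  refine ⟨Int.le_floor.2 ?_, by linarith, by linarith⟩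
  rw [Int.cast_one, le_div_iff₀ h1y]
  linarith [hy.1]

lemma oocfK_mul_one_sub_lt_one (hy : y ∈ Ico 0 1) (hirr : Irrational y) :
    (oocfK y : ℝ) * (1 - y) < 1 := by
  obtain ⟨hk, hle, -⟩ := oocfK_bounds hy
  have hne : (oocfK y : ℝ) * y ≠ ((oocfK y - 1 : ℤ) : ℝ) :=
    (hirr.intCast_mul (by omega)).ne_int _
  push_cast at hne
  linarith [lt_of_le_of_ne hle (Ne.symm hne)]

lemma oocfT_branches (hy : y ∈ Ico 0 1) :
    (oocfA y = oocfK y + 1 ∧ oocfE y = -1 ∧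
        (2 * oocfK y + 1 : ℝ) * y < 2 * oocfK y - 1 ∧
        oocfT y * (oocfK y - (oocfK y + 1) * y) = oocfK y * y - (oocfK y - 1)) ∨
    (oocfA y = oocfK y ∧ oocfE y = 1 ∧
        (2 * oocfK y - 1 : ℝ) ≤ (2 * oocfK y + 1) * y ∧
        oocfT y * (oocfK y * y - (oocfK y - 1)) = oocfK y - (oocfK y + 1) * y) := by
  obtain ⟨hk, hlo, hhi⟩ := oocfK_bounds hy
  have hk' : (1 : ℝ) ≤ oocfK y := by exact_mod_cast hk
  have h2k : (0 : ℝ) < 2 * oocfK y + 1 := by linarith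
  unfold oocfT oocfA oocfE
  rw [if_neg hy.2.ne, show ⌊1 / (1 - y)⌋ = oocfK y from rfl]
  split_ifs with h
  · rw [lt_div_iff₀ h2k] at h
    refine Or.inl ⟨rfl, rfl, by linarith, div_mul_cancel₀ _ (by linarith)⟩
  · rw [not_lt, div_le_iff₀ h2k] at h
    refine Or.inr ⟨rfl, rfl, by linarith, div_mul_cancel₀ _ (by nlinarith)⟩

lemma oocf_moebius (hy : y ∈ Ico 0 1) :
    y * (oocfA y * oocfT y + (oocfA y + oocfE y)) =
      (oocfA y - 1) * oocfT y + (oocfA y - 1 + oocfE y) := by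
  rcases oocfT_branches hy with ⟨ha, he, -, hT⟩ | ⟨ha, he, -, hT⟩ <;>
    rw [ha, he] <;> push_cast
  · linear_combination -hT
  · linear_combination hT

lemma oocfT_mem_Ioo (hy : y ∈ Ico 0 1) (hirr : Irrational y) : oocfT y ∈ Ioo 0 1 := by
  have hkY := oocfK_mul_one_sub_lt_one hy hirr
  obtain ⟨hk, -, hhi⟩ := oocfK_bounds hy
  have hk' : (1 : ℝ) ≤ oocfK y := by exact_mod_cast hk
  rcases oocfT_branches hy with ⟨-, -, hθ, hT⟩ | ⟨-, -, hθ, hT⟩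
  · constructor <;> nlinarith
  · have hθ' : (2 * oocfK y - 1 : ℝ) ≠ (2 * oocfK y + 1) * y := by
      have := (hirr.intCast_mul (m := 2 * oocfK y + 1) (by omega)).ne_int (2 * oocfK y - 1)
      push_cast at this
      exact this.symm
    have hθ := lt_of_le_of_ne hθ hθ'
    constructor <;> nlinarith

lemma irrational_oocfT (hy : y ∈ Ico 0 1) (hirr : Irrational y) : Irrational (oocfT y) := by
  have hT := oocfT_mem_Ioo hy hirr
  have ha : (oocfK y : ℝ) ≤ oocfA y := by exact_mod_cast oocfK_le_oocfA y
  have hae : (oocfK y : ℝ) ≤ oocfA y + oocfE y := by exact_mod_cast oocfK_le_oocfA_add_oocfE y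
  have hk : (1 : ℝ) ≤ oocfK y := by exact_mod_cast (oocfK_bounds hy).1
  refine hirr.of_mul_add_eq_mul_add (a := oocfA y - 1) (b := oocfA y - 1 + oocfE y)
    (c := oocfA y) (d := oocfA y + oocfE y) (by push_cast; exact oocf_moebius hy) ?_
  push_cast
  nlinarith [hT.1]

end Step

lemma oocfT_iterate_mem {x : ℝ} (hx : x ∈ Ico 0 1) (hirr : Irrational x) (n : ℕ) :
    oocfT^[n] x ∈ Ico 0 1 ∧ Irrational (oocfT^[n] x) := by
  induction n with
  | zero => exact ⟨hx, hirr⟩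
  | succ n ih =>
    rw [Function.iterate_succ_apply']
    exact ⟨Ioo_subset_Ico_self (oocfT_mem_Ioo ih.1 ih.2), irrational_oocfT ih.1 ih.2⟩

section Convergents

variable (x : ℝ) (n : ℕ)

lemma oocfP'_succ : oocfP' x (n + 1) = oocfA (oocfT^[n] x) * oocfP x n - oocfP' x n := rfl

lemma oocfQ'_succ : oocfQ' x (n + 1) = oocfA (oocfT^[n] x) * oocfQ x n - oocfQ' x n := rfl

lemma oocfP_succ : oocfP x (n + 1) = 2 * oocfP' x (n + 1) + oocfE (oocfT^[n] x) * oocfP x n :=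
  rfl

lemma oocfQ_succ : oocfQ x (n + 1) = 2 * oocfQ' x (n + 1) + oocfE (oocfT^[n] x) * oocfQ x n :=
  rfl

lemma oocfQ_succ_eq :
    oocfQ x (n + 1) = (2 * oocfK (oocfT^[n] x) + 1) * oocfQ x n - 2 * oocfQ' x n := by
  rw [oocfQ_succ, oocfQ'_succ, ← two_mul_oocfA_add_oocfE]
  ring

lemma isUnit_oocf_det : IsUnit (oocfP' x n * oocfQ x n - oocfP x n * oocfQ' x n) := by
  induction n with
  | zero => simp [oocfP', oocfQ', oocfP, oocfQ, oocfConv]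
  | succ n ih =>
    have hdet : oocfP' x (n + 1) * oocfQ x (n + 1) - oocfP x (n + 1) * oocfQ' x (n + 1) =
        -oocfE (oocfT^[n] x) * (oocfP' x n * oocfQ x n - oocfP x n * oocfQ' x n) := by
      rw [oocfP_succ, oocfQ_succ, oocfP'_succ, oocfQ'_succ]
      ring
    rw [hdet]
    exact (isUnit_oocfE _).neg.mul ih

lemma isCoprime_oocfP_oocfQ : IsCoprime (oocfP x n) (oocfQ x n) := by
  have hw := Int.isUnit_mul_self (isUnit_oocf_det x n)
  exact ⟨-((oocfP' x n * oocfQ x n - oocfP x n * oocfQ' x n) * oocfQ' x n),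
    (oocfP' x n * oocfQ x n - oocfP x n * oocfQ' x n) * oocfP' x n, by linear_combination hw⟩

lemma odd_oocfP : Odd (oocfP x n) := by
  induction n with
  | zero => exact odd_one
  | succ n ih => exact (even_two_mul _).add_odd ((odd_oocfE _).mul ih)

lemma odd_oocfQ : Odd (oocfQ x n) := by
  induction n with
  | zero => exact odd_one
  | succ n ih => exact (even_two_mul _).add_odd ((odd_oocfE _).mul ih)

lemma odd_oocfP'_add_oocfQ' : Odd (oocfP' x n + oocfQ' x n) := by
  induction n with
  | zero => exact odd_one
  | succ n ih =>
    have hsum : oocfP' x (n + 1) + oocfQ' x (n + 1) =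
        oocfA (oocfT^[n] x) * (oocfP x n + oocfQ x n) - (oocfP' x n + oocfQ' x n) := by
      rw [oocfP'_succ, oocfQ'_succ]
      ring
    rw [hsum]
    exact (((odd_oocfP x n).add_odd (odd_oocfQ x n)).mul_left _).sub_odd ih

end Convergents

section Orbit

variable {x : ℝ}

lemma oocfQ'_nonneg_and_lt_oocfQ (hx : x ∈ Ico 0 1) (hirr : Irrational x) (n : ℕ) :
    0 ≤ oocfQ' x n ∧ oocfQ' x n < oocfQ x n := by
  induction n with
  | zero => simp [oocfQ', oocfQ, oocfConv]
  | succ n ih =>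
    obtain ⟨hq'0, hq'q⟩ := ih
    have hk := (oocfK_bounds (oocfT_iterate_mem hx hirr n).1).1
    have ha := mul_le_mul_of_nonneg_right (oocfK_le_oocfA (oocfT^[n] x)) (hq'0.trans hq'q.le)
    have hae := mul_le_mul_of_nonneg_right (oocfK_le_oocfA_add_oocfE (oocfT^[n] x))
      (hq'0.trans hq'q.le)
    rw [oocfQ_succ, oocfQ'_succ]
    constructor <;> nlinarith

lemma oocfQ_lt_oocfQ_succ (hx : x ∈ Ico 0 1) (hirr : Irrational x) (n : ℕ) :
    oocfQ x n < oocfQ x (n + 1) := by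
  obtain ⟨hq'0, hq'q⟩ := oocfQ'_nonneg_and_lt_oocfQ hx hirr n
  have hk := (oocfK_bounds (oocfT_iterate_mem hx hirr n).1).1
  rw [oocfQ_succ_eq]
  nlinarith

lemma isOneRat_oocfP_oocfQ (hx : x ∈ Ico 0 1) (hirr : Irrational x) (n : ℕ) :
    IsOneRat (oocfP x n) (oocfQ x n) :=
  ⟨(oocfQ'_nonneg_and_lt_oocfQ hx hirr n).1.trans_lt (oocfQ'_nonneg_and_lt_oocfQ hx hirr n).2,
    odd_oocfP x n, odd_oocfQ x n, isCoprime_oocfP_oocfQ x n⟩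

lemma oocf_moebius_iterate (hx : x ∈ Ico 0 1) (hirr : Irrational x) (n : ℕ) :
    x * (oocfQ' x n * oocfT^[n] x + (oocfQ x n - oocfQ' x n)) =
      oocfP' x n * oocfT^[n] x + (oocfP x n - oocfP' x n) := by
  induction n with
  | zero => simp [oocfP', oocfQ', oocfP, oocfQ, oocfConv]
  | succ n ih =>
    have hstep := oocf_moebius (oocfT_iterate_mem hx hirr n).1
    rw [← Function.iterate_succ_apply' oocfT n x] at hstep
    rw [oocfP_succ, oocfQ_succ, oocfP'_succ, oocfQ'_succ]
    push_cast
    linear_combination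
      ((oocfA (oocfT^[n] x) : ℝ) * oocfT^[n + 1] x + (oocfA (oocfT^[n] x) + oocfE (oocfT^[n] x)))
        * ih - (x * oocfQ' x n - oocfP' x n) * hstep

end Orbit

lemma abs_mul_sub_mul_abs_eq_of_moebius {x y : ℝ} {p' q' p q : ℤ}
    (hdet : IsUnit (p' * q - p * q'))
    (h : x * (q' * y + (q - q')) = p' * y + (p - p')) (σ τ : ℤ) :
    |((σ * q' + τ * q : ℤ) : ℝ) * x - ((σ * p' + τ * p : ℤ) : ℝ)| * |q' * y + (q - q')| =
      |σ + τ * (1 - y)| := by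
  have hw : |((p' * q - p * q' : ℤ) : ℝ)| = 1 := by
    rw [← Int.cast_abs, Int.isUnit_iff_abs_eq.1 hdet, Int.cast_one]
  have hlin : (((σ * q' + τ * q : ℤ) : ℝ) * x - ((σ * p' + τ * p : ℤ) : ℝ)) *
      (q' * y + (q - q')) = -((p' * q - p * q' : ℤ) : ℝ) * (σ + τ * (1 - y)) := by
    push_cast
    linear_combination (σ * q' + τ * q : ℝ) * h
  rw [← abs_mul, hlin, abs_mul, abs_neg, hw, one_mul]

lemma eq_zero_and_eq_one_of_abs_add_mul_le {k q q' σ τ : ℤ} {Y : ℝ} (hk : 1 ≤ k) (hY : 0 < Y)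
    (hkY : k * Y < 1) (hq' : 0 ≤ q') (hq'q : q' < q) (hσ : Even σ) (hτ : Odd τ)
    (hb : 0 < σ * q' + τ * q) (hbq : σ * q' + τ * q < (2 * k + 1) * q - 2 * q')
    (hle : |σ + τ * Y| ≤ Y) : σ = 0 ∧ τ = 1 := by
  obtain ⟨hlo, hhi⟩ := abs_le.1 hle
  have hk' : (1 : ℝ) ≤ k := by exact_mod_cast hk
  rcases le_or_gt τ 0 with hτ0 | hτ0
  · -- `σ < 1 - τ` makes `b ≤ τ (q - q') ≤ 0`
    exfalso
    have hτ0' : (τ : ℝ) ≤ 0 := by exact_mod_cast hτ0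
    have hσ1 : σ < 1 - τ := by
      have : (σ : ℝ) < 1 - τ := by nlinarith
      exact_mod_cast this
    nlinarith
  · have hτ0' : (1 : ℝ) ≤ τ := by exact_mod_cast hτ0
    have hσ0 : σ ≤ 0 := by
      have : (σ : ℝ) ≤ 0 := by nlinarith
      exact_mod_cast this
    -- `-σ ≤ (τ + 1) Y` and `k Y < 1` force `-σ k < τ + 1`, hence `-σ k < τ` by parity
    have hσk : -(σ * k) + 1 ≤ τ := by
      have hlt : -(σ * k) < τ + 1 := by
        have : -((σ : ℝ) * k) < τ + 1 := by nlinarith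
        exact_mod_cast this
      obtain ⟨m, hm⟩ := hσ.mul_right k
      obtain ⟨t, ht⟩ := hτ
      omega
    rcases eq_or_lt_of_le hσ0 with rfl | hσneg
    · refine ⟨rfl, ?_⟩
      have : (τ : ℝ) ≤ 1 := by push_cast at hhi; nlinarith
      exact le_antisymm (by exact_mod_cast this) hτ0
    · exfalso
      have hσ2 : σ + 2 ≤ 0 := by obtain ⟨m, hm⟩ := hσ; omega
      nlinarith [mul_le_mul_of_nonneg_right hσk (hq'.trans hq'q.le),
        mul_nonneg (neg_nonneg.2 hσ2) (by nlinarith : 0 ≤ k * q - q')]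

lemma exists_even_odd_coords {p' q' p q a b : ℤ} (hdet : IsUnit (p' * q - p * q'))
    (hp : Odd p) (hq : Odd q) (hpq' : Odd (p' + q')) (ha : Odd a) (hb : Odd b) :
    ∃ σ τ : ℤ, Even σ ∧ Odd τ ∧ σ * p' + τ * p = a ∧ σ * q' + τ * q = b := by
  have hww := Int.isUnit_mul_self hdet
  set w := p' * q - p * q'
  refine ⟨w * (q * a - p * b), w * (p' * b - q' * a), ((hq.mul ha).sub_odd (hp.mul hb)).mul_left w,
    ?_, by linear_combination a * hww, by linear_combination b * hww⟩
  rw [show p' * b - q' * a = (p' + q') * b - q' * (a + b) by ring]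
  exact (Int.odd_mul.1 (hww ▸ odd_one)).1.mul
    ((hpq'.mul hb).sub_even ((ha.add_odd hb).mul_left q'))

lemma abs_oocfQ_mul_sub_oocfP_lt {x : ℝ} (hx : x ∈ Ico 0 1) (hirr : Irrational x) (n : ℕ)
    {a b : ℤ} (ha : Odd a) (hb : Odd b) (hb0 : 0 < b) (hbn : b < oocfQ x (n + 1))
    (hne : (a, b) ≠ (oocfP x n, oocfQ x n)) :
    |oocfQ x n * x - oocfP x n| < |b * x - a| := by
  obtain ⟨hy, hirry⟩ := oocfT_iterate_mem hx hirr n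
  obtain ⟨hq'0, hq'q⟩ := oocfQ'_nonneg_and_lt_oocfQ hx hirr n
  have hdet := isUnit_oocf_det x n
  have hmoeb := oocf_moebius_iterate hx hirr n
  rw [oocfQ_succ_eq] at hbn
  obtain ⟨σ, τ, hσ, hτ, rfl, rfl⟩ := exists_even_odd_coords hdet (odd_oocfP x n)
    (odd_oocfQ x n) (odd_oocfP'_add_oocfQ' x n) ha hb
  set y := oocfT^[n] x
  have hD : 0 < (oocfQ' x n : ℝ) * y + (oocfQ x n - oocfQ' x n) := by
    have : (0 : ℝ) ≤ oocfQ' x n := by exact_mod_cast hq'0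
    have : (oocfQ' x n : ℝ) < oocfQ x n := by exact_mod_cast hq'q
    nlinarith [hy.1]
  have hbx := abs_mul_sub_mul_abs_eq_of_moebius hdet hmoeb σ τ
  have hqx := abs_mul_sub_mul_abs_eq_of_moebius hdet hmoeb 0 1
  rw [abs_of_pos hD] at hbx
  simp only [zero_mul, one_mul, zero_add, Int.cast_zero, Int.cast_one, abs_of_pos hD,
    abs_of_pos (sub_pos.2 hy.2)] at hqx
  have hkey : 1 - y < |σ + τ * (1 - y)| := by
    by_contra hle
    obtain ⟨rfl, rfl⟩ := eq_zero_and_eq_one_of_abs_add_mul_le (oocfK_bounds hy).1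
      (sub_pos.2 hy.2) (oocfK_mul_one_sub_lt_one hy hirry) hq'0 hq'q hσ hτ hb0 hbn (not_lt.1 hle)
    simp at hne
  exact lt_of_mul_lt_mul_right (by rw [hqx, hbx]; exact hkey) hD.le

lemma exists_le_lt_succ_of_lt_succ {f : ℕ → ℤ} (hf : ∀ n, f n < f (n + 1)) {q : ℤ}
    (hq : f 0 ≤ q) :
    ∃ n, f n ≤ q ∧ q < f (n + 1) := by
  by_contra! h
  have hle : ∀ n, f n ≤ q := fun n => by
    induction n with
    | zero => exact hq
    | succ n ih => exact h n ih
  have hgrow : ∀ n : ℕ, f 0 + n ≤ f n := fun n => by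
    induction n with
    | zero => simp
    | succ n ih => push_cast; linarith [hf n]
  have := (hgrow (q - f 0 + 1).toNat).trans (hle _)
  omega

/-- Every best 1-rational approximation of an irrational `x ∈ (0,1)` is a principal
convergent of the odd-odd continued fraction of `x`. -/
theorem isBestOneRatApprox_eq_oocf_principal_convergent
    (x : ℝ) (hx : x ∈ Set.Ioo (0 : ℝ) 1) (hirr : Irrational x)
    (p q : ℤ) (h : IsBestOneRatApprox x p q) :
    ∃ n : ℕ, (p : ℝ) / (q : ℝ) = (oocfP x n : ℝ) / (oocfQ x n : ℝ) := by
  have hx' : x ∈ Ico 0 1 := Ioo_subset_Ico_self hx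
  obtain ⟨⟨hq0, hp, hq, -⟩, hbest⟩ := h
  obtain ⟨n, hqn, hqn1⟩ :=
    exists_le_lt_succ_of_lt_succ (oocfQ_lt_oocfQ_succ hx' hirr) (q := q)
      (by change 1 ≤ q; omega)
  refine ⟨n, by_contra fun hne => ?_⟩
  have hworse := hbest _ _ (isOneRat_oocfP_oocfQ hx' hirr n) hqn (Ne.symm hne)
  have hbetter := abs_oocfQ_mul_sub_oocfP_lt hx' hirr n hp hq hq0 hqn1
    fun hpq => hne (by simp only [Prod.mk.injEq] at hpq; rw [hpq.1, hpq.2])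
  linarith
end

section
/- Let x ∈ (0,1) be irrational and suppose there exist integers α, β, γ with α ≠ 0 such that α·x² + β·x + γ = 0 (i.e., x is a quadratic irrational). Then the orbit of x under the odd-odd continued fraction map T is eventually periodic: there exist integers 0 ≤ i < j with T^i(x) = T^j(x). -/
open Set

lemma Irrational.of_mobius {z w : ℝ} (hz : Irrational z) {a b c d : ℤ}
    (hden : c * w + d ≠ 0) (hrel : a * w + b = z * (c * w + d)) : Irrational w := by
  rintro ⟨q, rfl⟩
  refine hz ⟨(a * q + b) / (c * q + d), ?_⟩
  push_cast
  rw [div_eq_iff hden, hrel]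

/-- `!![a, b; c, d]`, acting by `w ↦ (a w + b) / (c w + d)`. These matrices are closed under products
and include `!![k, k - 1; k + 1, k]` and `!![k - 1, k; k, k + 1]`, the two branches of `oocfT`. -/
def IsOocfMatrix (a b c d : ℤ) : Prop :=
  0 ≤ a ∧ a ≤ c ∧ 0 ≤ b ∧ b ≤ d ∧ (a * d - b * c) ^ 2 = 1

namespace IsOocfMatrix

variable {a b c d a' b' c' d' : ℤ}

lemma c_pos (h : IsOocfMatrix a b c d) : 0 < c := by
  obtain ⟨ha, hac, hb, hbd, hdet⟩ := h
  by_contra! hc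
  obtain rfl : a = 0 := by omega
  obtain rfl : c = 0 := by omega
  simp at hdet

lemma d_pos (h : IsOocfMatrix a b c d) : 0 < d := by
  obtain ⟨ha, hac, hb, hbd, hdet⟩ := h
  by_contra! hd
  obtain rfl : b = 0 := by omega
  obtain rfl : d = 0 := by omega
  simp at hdet

lemma mul (h : IsOocfMatrix a b c d) (h' : IsOocfMatrix a' b' c' d') :
    IsOocfMatrix (a * a' + b * c') (a * b' + b * d') (c * a' + d * c') (c * b' + d * d') := by
  obtain ⟨ha, hac, hb, hbd, hdet⟩ := h
  obtain ⟨ha', hac', hb', hbd', hdet'⟩ := h'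
  have hc' := ha'.trans hac'
  have hd' := hb'.trans hbd'
  refine ⟨by positivity, by gcongr, by positivity, by gcongr, ?_⟩
  linear_combination (a' * d' - b' * c') ^ 2 * hdet + hdet'

end IsOocfMatrix

lemma mobius_rel_mul {x y w : ℝ} {a b c d a' b' c' d' : ℤ}
    (h : a * y + b = x * (c * y + d)) (h' : a' * w + b' = y * (c' * w + d')) :
    ((a * a' + b * c' : ℤ) : ℝ) * w + (a * b' + b * d' : ℤ)
      = x * ((c * a' + d * c' : ℤ) * w + (c * b' + d * d' : ℤ)) := by
  push_cast
  linear_combination (a - x * c) * h' + (c' * w + d') * h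

lemma one_le_floor_one_div_one_sub {z : ℝ} (hz : z ∈ Ioo 0 1) : 1 ≤ ⌊1 / (1 - z)⌋ := by
  rw [Int.le_floor, Int.cast_one, le_div_iff₀ (by linarith [hz.2])]
  linarith [hz.1]

lemma mem_Ioo_oocfT_and_exists_isOocfMatrix {z : ℝ} (hz : z ∈ Ioo 0 1) (hirr : Irrational z) :
    oocfT z ∈ Ioo 0 1 ∧ ∃ a b c d : ℤ, IsOocfMatrix a b c d ∧
      a * oocfT z + b = z * (c * oocfT z + d) := by
  have hk := one_le_floor_one_div_one_sub hz
  have h1z : 0 < 1 - z := by linarith [hz.2]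
  have hfloor := (le_div_iff₀ h1z).1 (Int.floor_le (1 / (1 - z)))
  have hceil := (div_lt_iff₀ h1z).1 (Int.lt_floor_add_one (1 / (1 - z)))
  rw [oocfT, if_neg hz.2.ne]
  set k := ⌊1 / (1 - z)⌋
  have hlo : (k : ℝ) - 1 < k * z := by
    refine lt_of_le_of_ne (by linarith) fun h => ?_
    exact (hirr.intCast_mul (m := k) (by omega)).ne_int (k - 1) (by push_cast; linarith)
  have hhi : (k + 1 : ℝ) * z < k := by linarith
  have hmid : (2 * k + 1 : ℝ) * z ≠ 2 * k - 1 := by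
    exact_mod_cast (hirr.intCast_mul (m := 2 * k + 1) (by omega)).ne_int (2 * k - 1)
  have h2k : (0 : ℝ) < 2 * k + 1 := by positivity
  rcases lt_or_gt_of_ne hmid with hbr | hbr
  · rw [if_pos ((lt_div_iff₀ h2k).2 (by linarith))]
    have hden : (0 : ℝ) < k - (k + 1) * z := by linarith
    refine ⟨⟨div_pos (by linarith) hden, (div_lt_one hden).2 (by linarith)⟩,
      k, k - 1, k + 1, k, ⟨by omega, by omega, by omega, by omega, by ring⟩, ?_⟩
    push_cast
    linear_combination div_mul_cancel₀ ((k : ℝ) * z - (k - 1)) hden.ne'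
  · rw [if_neg (not_lt.2 ((div_le_iff₀ h2k).2 (by linarith)))]
    have hden : (0 : ℝ) < k * z - (k - 1) := by linarith
    refine ⟨⟨div_pos (by linarith) hden, (div_lt_one hden).2 (by linarith)⟩,
      k - 1, k, k, k + 1, ⟨by omega, by omega, by omega, by omega, by ring⟩, ?_⟩
    push_cast
    linear_combination -div_mul_cancel₀ ((k : ℝ) - (k + 1) * z) hden.ne'

lemma mapsTo_oocfT :
    MapsTo oocfT {z | z ∈ Ioo 0 1 ∧ Irrational z} {z | z ∈ Ioo 0 1 ∧ Irrational z} := by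
  rintro z ⟨hz, hirr⟩
  obtain ⟨hT, a, b, c, d, hM, hrel⟩ := mem_Ioo_oocfT_and_exists_isOocfMatrix hz hirr
  have hden : (0 : ℝ) < c * oocfT z + d := by
    have := hM.c_pos
    have := hM.d_pos
    have := hT.1
    positivity
  exact ⟨hT, hirr.of_mobius hden.ne' hrel⟩

lemma exists_isOocfMatrix_iterate {x : ℝ} (hx : x ∈ Ioo 0 1) (hirr : Irrational x) (n : ℕ) :
    ∃ a b c d : ℤ, IsOocfMatrix a b c d ∧
      a * oocfT^[n + 1] x + b = x * (c * oocfT^[n + 1] x + d) := by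
  induction n with
  | zero => simpa using (mem_Ioo_oocfT_and_exists_isOocfMatrix hx hirr).2
  | succ n ih =>
    obtain ⟨a, b, c, d, hM, hrel⟩ := ih
    obtain ⟨hy, hyirr⟩ := mapsTo_oocfT.iterate (n + 1) ⟨hx, hirr⟩
    obtain ⟨-, a', b', c', d', hM', hrel'⟩ := mem_Ioo_oocfT_and_exists_isOocfMatrix hy hyirr
    rw [Function.iterate_succ_apply']
    exact ⟨_, _, _, _, hM.mul hM', mobius_rel_mul hrel hrel'⟩

def quadForm (α β γ u v : ℤ) : ℤ := α * u ^ 2 + β * u * v + γ * v ^ 2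

/-- The polarization of `quadForm`: `quadForm (u₁ + u₂) (v₁ + v₂)` is
`quadForm u₁ v₁ + quadPolar u₁ v₁ u₂ v₂ + quadForm u₂ v₂`. -/
def quadPolar (α β γ u₁ v₁ u₂ v₂ : ℤ) : ℤ :=
  2 * α * u₁ * u₂ + β * (u₁ * v₂ + u₂ * v₁) + 2 * γ * v₁ * v₂

section QuadForm

variable {α β γ : ℤ} {x : ℝ}

lemma quadForm_eq_mul (hx : α * x ^ 2 + β * x + γ = 0) (u v : ℤ) :
    (quadForm α β γ u v : ℝ) = (u - v * x) * (α * (u + v * x) + β * v) := by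
  push_cast [quadForm]
  linear_combination (v : ℝ) ^ 2 * hx

lemma quadForm_ne_zero (hirr : Irrational x) (hα : α ≠ 0) (hx : α * x ^ 2 + β * x + γ = 0)
    (u : ℤ) {v : ℤ} (hv : v ≠ 0) : quadForm α β γ u v ≠ 0 := by
  intro h
  have h0 := quadForm_eq_mul hx u v
  rw [h, Int.cast_zero, eq_comm, mul_eq_zero] at h0
  rcases h0 with h0 | h0
  · exact (hirr.intCast_mul hv).ne_int u (by linarith)
  · exact (hirr.intCast_mul (mul_ne_zero hα hv)).ne_int (-(α * u + β * v))
      (by push_cast; linear_combination h0)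

lemma discrim_quadForm_quadPolar (a b c d : ℤ) :
    discrim (quadForm α β γ a c) (quadPolar α β γ a c b d) (quadForm α β γ b d)
      = discrim α β γ * (a * d - b * c) ^ 2 := by
  simp only [discrim, quadForm, quadPolar]
  ring

lemma quadForm_quadPolar_mobius {y : ℝ} {a b c d : ℤ} (hx : α * x ^ 2 + β * x + γ = 0)
    (hrel : a * y + b = x * (c * y + d)) :
    (quadForm α β γ a c : ℝ) * y ^ 2 + quadPolar α β γ a c b d * y + quadForm α β γ b d = 0 := by
  push_cast [quadForm, quadPolar]
  linear_combination (c * y + d) ^ 2 * hx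
    + (α * (a * y + b + x * (c * y + d)) + β * (c * y + d)) * hrel

lemma abs_quadForm_cofactor_le {u v : ℤ} (hu : 0 ≤ u) (huv : u ≤ v) (hx : x ∈ Icc 0 1) :
    |α * (u + v * x) + β * v| ≤ (2 * |(α : ℝ)| + |(β : ℝ)|) * v := by
  have hv : (0 : ℝ) ≤ v := by exact_mod_cast hu.trans huv
  have hux : 0 ≤ (u : ℝ) + v * x := by
    have := hx.1
    positivity
  have hux' : (u : ℝ) + v * x ≤ 2 * v := by
    have : (v : ℝ) * x ≤ v := mul_le_of_le_one_right hv hx.2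
    have : (u : ℝ) ≤ v := by exact_mod_cast huv
    linarith
  calc |α * (u + v * x) + β * v| ≤ |(α : ℝ)| * (u + v * x) + |(β : ℝ)| * v := by
        refine (abs_add_le _ _).trans_eq ?_
        rw [abs_mul, abs_mul, abs_of_nonneg hux, abs_of_nonneg hv]
    _ ≤ |(α : ℝ)| * (2 * v) + |(β : ℝ)| * v := by gcongr
    _ = (2 * |(α : ℝ)| + |(β : ℝ)|) * v := by ring

lemma abs_quadForm_mul_abs_quadForm_le {y : ℝ} {a b c d : ℤ} (hx : x ∈ Ioo 0 1)
    (hroot : α * x ^ 2 + β * x + γ = 0) (hM : IsOocfMatrix a b c d) (hy : 0 ≤ y)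
    (hrel : a * y + b = x * (c * y + d)) :
    |quadForm α β γ a c| * |quadForm α β γ b d| ≤ (2 * |α| + |β|) ^ 2 := by
  have hc : (0 : ℝ) < c := by exact_mod_cast hM.c_pos
  have hd : (0 : ℝ) < d := by exact_mod_cast hM.d_pos
  obtain ⟨ha, hac, hb, hbd, hdet⟩ := hM
  have hdetR : ((a : ℝ) * d - b * c) ^ 2 = 1 := by exact_mod_cast hdet
  have hD2 : y * c * d ≤ (c * y + d) ^ 2 := by
    nlinarith [mul_nonneg (mul_nonneg hy hc.le) hd.le, sq_nonneg ((c : ℝ) * y), sq_nonneg (d : ℝ)]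
  have hD : 0 < (c : ℝ) * y + d := by positivity
  set D : ℝ := c * y + d
  set G₁ : ℝ := α * (a + c * x) + β * c
  set G₂ : ℝ := α * (b + d * x) + β * d
  have h₁ : (a - c * x) * D = a * d - b * c := by linear_combination (c : ℝ) * hrel
  have h₂ : (b - d * x) * D = -((a * d - b * c) * y) := by linear_combination (d : ℝ) * hrel
  have hAC : (quadForm α β γ a c * quadForm α β γ b d : ℝ) * D ^ 2 = -(y * (G₁ * G₂)) := by
    rw [quadForm_eq_mul hroot, quadForm_eq_mul hroot]
    linear_combination G₁ * G₂ * ((b - d * x) * D * h₁ + (a * d - b * c) * h₂ - y * hdetR)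
  have habs : |(quadForm α β γ a c : ℝ)| * |(quadForm α β γ b d : ℝ)| * D ^ 2
      = y * (|G₁| * |G₂|) := by
    simpa only [abs_mul, abs_neg, abs_pow, abs_of_nonneg hy, abs_of_pos hD] using congrArg abs hAC
  have hG : y * (|G₁| * |G₂|) ≤ (2 * |(α : ℝ)| + |(β : ℝ)|) ^ 2 * D ^ 2 :=
    calc y * (|G₁| * |G₂|)
        ≤ y * ((2 * |(α : ℝ)| + |(β : ℝ)|) * c * ((2 * |(α : ℝ)| + |(β : ℝ)|) * d)) := by
          have := abs_quadForm_cofactor_le (α := α) (β := β) ha hac (Ioo_subset_Icc_self hx)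
          have := abs_quadForm_cofactor_le (α := α) (β := β) hb hbd (Ioo_subset_Icc_self hx)
          gcongr
      _ = (2 * |(α : ℝ)| + |(β : ℝ)|) ^ 2 * (y * c * d) := by ring
      _ ≤ (2 * |(α : ℝ)| + |(β : ℝ)|) ^ 2 * D ^ 2 := by gcongr
  exact_mod_cast le_of_mul_le_mul_right (habs.trans_le hG) (by positivity)

end QuadForm

open Polynomial in
lemma finite_setOf_quadratic_eq_zero {a : ℝ} (ha : a ≠ 0) (b c : ℝ) :
    {y : ℝ | a * y ^ 2 + b * y + c = 0}.Finite := by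
  have hp : C a * X ^ 2 + C b * X + C c ≠ 0 := fun h => by
    simpa [h] using natDegree_quadratic (b := b) (c := c) ha
  simpa using finite_setOfPred_isRoot hp

def rootsOfBoundedQuadratics (K : ℤ) : Set ℝ :=
  {y | ∃ A B C : ℤ, A ≠ 0 ∧ |A| ≤ K ∧ |B| ≤ K ∧ |C| ≤ K ∧ A * y ^ 2 + B * y + C = 0}

lemma finite_rootsOfBoundedQuadratics (K : ℤ) : (rootsOfBoundedQuadratics K).Finite := by
  have hbox : {t : ℤ × ℤ × ℤ | t.1 ≠ 0 ∧ t ∈ Icc (-K) K ×ˢ Icc (-K) K ×ˢ Icc (-K) K}.Finite :=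
    ((finite_Icc _ _).prod ((finite_Icc _ _).prod (finite_Icc _ _))).subset fun _ ht => ht.2
  refine (hbox.biUnion fun t ht => finite_setOf_quadratic_eq_zero
    (Int.cast_ne_zero.2 ht.1) t.2.1 t.2.2).subset ?_
  rintro y ⟨A, B, C, hA, hAK, hBK, hCK, hy⟩
  exact mem_biUnion (x := (A, B, C))
    ⟨hA, abs_le.1 hAK, abs_le.1 hBK, abs_le.1 hCK⟩ hy

lemma iterate_oocfT_mem_rootsOfBoundedQuadratics {x : ℝ} (hx : x ∈ Ioo 0 1)
    (hirr : Irrational x) {α β γ : ℤ} (hα : α ≠ 0) (hroot : α * x ^ 2 + β * x + γ = 0) (n : ℕ) :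
    oocfT^[n + 1] x ∈ rootsOfBoundedQuadratics (|discrim α β γ| + 4 * (2 * |α| + |β|) ^ 2) := by
  obtain ⟨a, b, c, d, hM, hrel⟩ := exists_isOocfMatrix_iterate hx hirr n
  have hy := (mapsTo_oocfT.iterate (n + 1) ⟨hx, hirr⟩).1
  have hA := quadForm_ne_zero hirr hα hroot a hM.c_pos.ne'
  have hC := quadForm_ne_zero hirr hα hroot b hM.d_pos.ne'
  have hAC := abs_quadForm_mul_abs_quadForm_le hx hroot hM hy.1.le hrel
  have hB : quadPolar α β γ a c b d ^ 2
      = discrim α β γ + 4 * (quadForm α β γ a c * quadForm α β γ b d) := by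
    have := discrim_quadForm_quadPolar (α := α) (β := β) (γ := γ) a b c d
    rw [hM.2.2.2.2, mul_one, discrim] at this
    linear_combination this
  have hK : (2 * |α| + |β|) ^ 2 ≤ |discrim α β γ| + 4 * (2 * |α| + |β|) ^ 2 := by
    linarith [abs_nonneg (discrim α β γ), sq_nonneg (2 * |α| + |β|)]
  refine ⟨_, _, _, hA, ?_, ?_, ?_, quadForm_quadPolar_mobius hroot hrel⟩
  · exact (le_mul_of_one_le_right (abs_nonneg _) (Int.one_le_abs hC)).trans (hAC.trans hK)
  · calc |quadPolar α β γ a c b d| ≤ quadPolar α β γ a c b d ^ 2 := by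
          simpa only [sq_abs] using Int.le_self_sq |quadPolar α β γ a c b d|
      _ = discrim α β γ + 4 * (quadForm α β γ a c * quadForm α β γ b d) := hB
      _ ≤ |discrim α β γ| + 4 * (|quadForm α β γ a c| * |quadForm α β γ b d|) := by
          rw [← abs_mul]
          gcongr <;> exact le_abs_self _
      _ ≤ |discrim α β γ| + 4 * (2 * |α| + |β|) ^ 2 := by gcongr
  · exact (le_mul_of_one_le_left (abs_nonneg _) (Int.one_le_abs hA)).trans (hAC.trans hK)

/-- Every quadratic irrational `x ∈ (0,1)` has an eventually periodic orbit under the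
odd-odd continued fraction map. -/
theorem quadratic_irrational_oocf_eventually_periodic
    (x : ℝ) (hx : x ∈ Set.Ioo (0 : ℝ) 1) (hirr : Irrational x)
    (α β γ : ℤ) (hα : α ≠ 0) (h : (α : ℝ) * x ^ 2 + (β : ℝ) * x + (γ : ℝ) = 0) :
    ∃ i j : ℕ, i < j ∧ oocfT^[i] x = oocfT^[j] x := by
  obtain ⟨i, j, hij, heq⟩ := (finite_rootsOfBoundedQuadratics _).exists_lt_map_eq_of_forall_mem
    (iterate_oocfT_mem_rootsOfBoundedQuadratics hx hirr hα h)
  exact ⟨i + 1, j + 1, by omega, heq⟩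
end
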